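/- arXiv:0911.1886 — 6 statements merged into one kernel-verified Lean document; each statement's English description precedes it below -/
import Mathlib

section
/- Let G be an additive abelian group and let σ : G × G → Circle (the multiplicative group of complex numbers of modulus 1) satisfy the 2-cocycle identity σ(x,y)·σ(x+y,z) = σ(x,y+z)·σ(y,z) for all x,y,z ∈ G, and be symmetric, i.e. σ(x,y) = σ(y,x) for all x,y ∈ G. Then σ is a coboundary: there exists a function ρ : G → Circle such that σ(x,y) = ρ(x)·ρ(y)·ρ(x+y)⁻¹ for all x,y ∈ G. -/
noncomputable instance : DivisibleBy (Additive Circle) ℤ :=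
  Function.Surjective.divisibleBy (f := Circle.expHom)
    (fun z => ⟨Complex.arg (Additive.toMul z : Circle), by
      show Additive.ofMul (Circle.exp _) = z
      rw [Circle.exp_arg]; rfl⟩)
    (fun a n => map_zsmul Circle.expHom n a)

/-- A symmetric Circle-valued 2-cocycle on an additive abelian group is a coboundary. -/
theorem symmetric_cocycle_is_coboundary {G : Type*} [AddCommGroup G]
    (σ : G → G → Circle)
    (hcocycle : ∀ x y z : G, σ x y * σ (x + y) z = σ x (y + z) * σ y z)
    (hsymm : ∀ x y : G, σ x y = σ y x) :
    ∃ ρ : G → Circle, ∀ x y : G, σ x y = ρ x * ρ y * (ρ (x + y))⁻¹ := by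
  set c : Circle := σ 0 0 with hc
  have h0 : ∀ x : G, σ x 0 = c := by
    intro x
    have := hcocycle x 0 0
    simp only [add_zero, zero_add] at this
    exact mul_left_cancel this
  have h0' : ∀ y : G, σ 0 y = c := fun y => (hsymm 0 y).trans (h0 y)
  letI instAdd : Add (Circle × G) := ⟨fun p q => (p.1 * q.1 * σ p.2 q.2, p.2 + q.2)⟩
  letI instZero : Zero (Circle × G) := ⟨(c⁻¹, 0)⟩
  letI instNeg : Neg (Circle × G) := ⟨fun p => ((p.1 * σ p.2 (-p.2) * c)⁻¹, -p.2)⟩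
  letI instE : AddCommGroup (Circle × G) :=
    { add := (· + ·)
      zero := 0
      neg := (- ·)
      nsmul := nsmulRec
      zsmul := zsmulRec
      add_assoc := by
        intro p q r
        refine Prod.ext ?_ (add_assoc _ _ _)
        show p.1 * q.1 * σ p.2 q.2 * r.1 * σ (p.2 + q.2) r.2
            = p.1 * (q.1 * r.1 * σ q.2 r.2) * σ p.2 (q.2 + r.2)
        have key := congrArg (Subtype.val) (hcocycle p.2 q.2 r.2)
        push_cast at key
        apply Subtype.ext
        push_cast
        linear_combination (p.1 : ℂ) * q.1 * r.1 * key
      zero_add := by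
        intro p
        refine Prod.ext ?_ (zero_add _)
        show c⁻¹ * p.1 * σ 0 p.2 = p.1
        rw [h0', mul_comm c⁻¹ p.1, mul_assoc, inv_mul_cancel, mul_one]
      add_zero := by
        intro p
        refine Prod.ext ?_ (add_zero _)
        show p.1 * c⁻¹ * σ p.2 0 = p.1
        rw [h0, mul_assoc, inv_mul_cancel, mul_one]
      neg_add_cancel := by
        intro p
        refine Prod.ext ?_ (neg_add_cancel _)
        show (p.1 * σ p.2 (-p.2) * c)⁻¹ * p.1 * σ (-p.2) p.2 = c⁻¹
        rw [hsymm (-p.2) p.2]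
        simp [mul_inv_rev, mul_comm, mul_left_comm, mul_assoc]
      add_comm := by
        intro p q
        refine Prod.ext ?_ (add_comm _ _)
        show p.1 * q.1 * σ p.2 q.2 = q.1 * p.1 * σ q.2 p.2
        rw [hsymm, mul_comm p.1 q.1] }
  let ι : Additive Circle →+ (Circle × G) :=
    { toFun := fun a => (a.toMul * c⁻¹, (0 : G))
      map_zero' := by
        refine Prod.ext ?_ rfl
        show (1 : Circle) * c⁻¹ = c⁻¹
        rw [one_mul]
      map_add' := by
        intro a b
        refine Prod.ext ?_ (zero_add 0).symm
        show (a + b).toMul * c⁻¹ = a.toMul * c⁻¹ * (b.toMul * c⁻¹) * σ 0 0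
        rw [← hc, toMul_add]
        simp [mul_comm, mul_left_comm, mul_assoc] }
  have hι : Function.Injective ι := by
    intro a b h
    have h1 : a.toMul * c⁻¹ = b.toMul * c⁻¹ := congrArg Prod.fst h
    exact Additive.toMul.injective (mul_right_cancel h1)
  obtain ⟨r, hr⟩ := (Module.Baer.of_divisible (Additive Circle)).extension_property_addMonoidHom
    ι hι (AddMonoidHom.id _)
  have hrι : ∀ a : Additive Circle, r (ι a) = a := fun a => congrFun (congrArg DFunLike.coe hr) a
  refine ⟨fun x => (r ((1 : Circle), x)).toMul, ?_⟩
  intro x y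
  have key : (((1 : Circle), x) : Circle × G) + ((1 : Circle), y)
      = ι (Additive.ofMul (σ x y)) + ((1 : Circle), x + y) := by
    refine Prod.ext ?_ (zero_add _).symm
    show (1 : Circle) * 1 * σ x y = σ x y * c⁻¹ * 1 * σ 0 (x + y)
    rw [h0', one_mul, one_mul, mul_one, mul_assoc, inv_mul_cancel, mul_one]
  have heq := congrArg r key
  rw [map_add, map_add, hrι] at heq
  have heq2 := congrArg Additive.toMul heq
  rw [toMul_add, toMul_add] at heq2
  simp only [toMul_ofMul] at heq2
  show σ x y = (r ((1 : Circle), x)).toMul * (r ((1 : Circle), y)).toMul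
      * ((r ((1 : Circle), x + y)).toMul)⁻¹
  rw [eq_mul_inv_iff_mul_eq]
  exact heq2.symm
end

section
/- Let G be an additive abelian group and let β₁, β₂ : G × G → Circle be bicharacters, i.e. each is a group homomorphism in each variable separately. Then β₁ and β₂ are cohomologous (there exists ρ : G → Circle with β₁(x,y)·ρ(x+y) = β₂(x,y)·ρ(x)·ρ(y) for all x,y ∈ G) if and only if the bicharacter β(x,y) := β₁(x,y)·β₂(x,y)⁻¹ is symmetric, i.e. β(x,y) = β(y,x) for all x,y ∈ G. -/
/-!
Writing `β = β₁ / β₂`, cohomology of `β₁` and `β₂` says exactly that `β(x, y) = ρ x ρ y / ρ (x + y)`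
for some `ρ`, and the right-hand side is symmetric. Conversely, a symmetric bicharacter `β` with
values in an abelian group `A` is a 2-cocycle, and its symmetry makes the extension
`G ×_β A` with `(x, a) + (y, b) = (x + y, a + b + β x y)` abelian. When `A` is divisible, as the
circle is, it is an injective abelian group, so `a ↦ (0, a)` has a retraction `r`, and
`ρ x := r (x, 0)` trivializes `β`, since `(x, 0) + (y, 0) = (x + y, 0) + (0, β x y)`.
-/

open Function

@[ext]
structure TwistedProd {G A : Type*} [AddCommGroup G] [AddCommGroup A] (β : G →+ G →+ A) where
  base : G
  fiber : A

namespace TwistedProd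

variable {G A : Type*} [AddCommGroup G] [AddCommGroup A] {β : G →+ G →+ A}

instance : Zero (TwistedProd β) := ⟨⟨0, 0⟩⟩

instance : Add (TwistedProd β) :=
  ⟨fun p q => ⟨p.base + q.base, p.fiber + q.fiber + β p.base q.base⟩⟩

instance : Neg (TwistedProd β) := ⟨fun p => ⟨-p.base, -p.fiber + β p.base p.base⟩⟩

@[simp] lemma base_zero : (0 : TwistedProd β).base = 0 := rfl
@[simp] lemma fiber_zero : (0 : TwistedProd β).fiber = 0 := rfl
@[simp] lemma base_add (p q : TwistedProd β) : (p + q).base = p.base + q.base := rfl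
@[simp] lemma fiber_add (p q : TwistedProd β) :
    (p + q).fiber = p.fiber + q.fiber + β p.base q.base := rfl
@[simp] lemma base_neg (p : TwistedProd β) : (-p).base = -p.base := rfl
@[simp] lemma fiber_neg (p : TwistedProd β) : (-p).fiber = -p.fiber + β p.base p.base := rfl

instance : AddGroup (TwistedProd β) where
  add_assoc p q r := by ext <;> simp <;> abel
  zero_add p := by ext <;> simp
  add_zero p := by ext <;> simp
  neg_add_cancel p := by ext <;> simp
  nsmul := nsmulRec
  zsmul := zsmulRec

abbrev addCommGroup (hβ : ∀ x y, β x y = β y x) : AddCommGroup (TwistedProd β) where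
  add_comm p q := by
    ext
    · exact add_comm _ _
    · simp only [fiber_add, add_comm p.fiber, hβ p.base]

def inr : A →+ TwistedProd β where
  toFun a := ⟨0, a⟩
  map_zero' := rfl
  map_add' a b := by ext <;> simp

lemma inr_injective : Injective (inr : A →+ TwistedProd β) :=
  fun _ _ h => congrArg fiber h

lemma mk_zero_add_mk_zero (x y : G) :
    (⟨x, 0⟩ + ⟨y, 0⟩ : TwistedProd β) = ⟨x + y, 0⟩ + inr (β x y) := by
  ext <;> simp [inr]

end TwistedProd

theorem AddMonoidHom.exists_eq_add_sub_of_symm {G A : Type*} [AddCommGroup G]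
    [AddCommGroup A] [DivisibleBy A ℤ] (β : G →+ G →+ A) (hβ : ∀ x y, β x y = β y x) :
    ∃ ρ : G → A, ∀ x y, β x y = ρ x + ρ y - ρ (x + y) := by
  let := TwistedProd.addCommGroup hβ
  obtain ⟨r, hr⟩ := (Module.Baer.of_divisible A).extension_property_addMonoidHom
    (N := TwistedProd β) TwistedProd.inr TwistedProd.inr_injective (AddMonoidHom.id A)
  refine ⟨fun x => r ⟨x, 0⟩, fun x y => ?_⟩
  have h := congrArg r (TwistedProd.mk_zero_add_mk_zero (β := β) x y)
  rw [map_add, map_add, ← AddMonoidHom.comp_apply, hr, AddMonoidHom.id_apply] at h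
  rw [h]
  abel

instance Additive.divisibleBy {A : Type*} [CommGroup A] [RootableBy A ℤ] :
    DivisibleBy (Additive A) ℤ where
  div a n := Additive.ofMul (RootableBy.root a.toMul n)
  div_zero a := congrArg Additive.ofMul (RootableBy.root_zero a.toMul)
  div_cancel a hn := congrArg Additive.ofMul (RootableBy.root_cancel a.toMul hn)

noncomputable instance Circle.rootableBy : RootableBy Circle ℤ :=
  rootableByOfPowLeftSurj _ _ fun {n} hn z => by
    obtain ⟨θ, rfl⟩ := Circle.exp_surjective z
    refine ⟨Circle.exp (θ / n), ?_⟩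
    change _ ^ n = _
    rw [← Circle.exp_zsmul, zsmul_eq_mul, mul_div_cancel₀ _ (Int.cast_ne_zero.2 hn)]

theorem exists_eq_mul_div_of_symm {G A : Type*} [AddCommGroup G] [CommGroup A] [RootableBy A ℤ]
    (β : G → G → A) (hl : ∀ x x' y, β (x + x') y = β x y * β x' y)
    (hr : ∀ x y y', β x (y + y') = β x y * β x y') (hs : ∀ x y, β x y = β y x) :
    ∃ ρ : G → A, ∀ x y, β x y = ρ x * ρ y / ρ (x + y) := by
  let b : G →+ G →+ Additive A :=
    AddMonoidHom.mk' (fun x => AddMonoidHom.mk' (fun y => Additive.ofMul (β x y)) (hr x))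
      fun x x' => AddMonoidHom.ext (hl x x')
  obtain ⟨ρ, hρ⟩ := b.exists_eq_add_sub_of_symm fun x y => congrArg Additive.ofMul (hs x y)
  exact ⟨fun x => (ρ x).toMul, fun x y => congrArg Additive.toMul (hρ x y)⟩

def Cohomologous {G A : Type*} [AddCommGroup G] [CommGroup A] (σ₁ σ₂ : G → G → A) : Prop :=
  ∃ ρ : G → A, ∀ x y, σ₁ x y * ρ (x + y) = σ₂ x y * ρ x * ρ y

theorem cohomologous_iff_exists_div_eq {G A : Type*} [AddCommGroup G] [CommGroup A]
    {σ₁ σ₂ : G → G → A} :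
    Cohomologous σ₁ σ₂ ↔ ∃ ρ : G → A, ∀ x y, σ₁ x y / σ₂ x y = ρ x * ρ y / ρ (x + y) := by
  refine exists_congr fun ρ => forall₂_congr fun x y => ?_
  rw [div_eq_div_iff_mul_eq_mul, mul_comm (ρ x * ρ y), mul_assoc]

/-- Two Circle-valued bicharacters on an additive abelian group are cohomologous
if and only if their quotient is a symmetric bicharacter. -/
theorem bicharacters_cohomologous_iff_quotient_symmetric {G : Type*} [AddCommGroup G]
    (β₁ β₂ : G → G → Circle)
    (h₁add_left : ∀ x x' y : G, β₁ (x + x') y = β₁ x y * β₁ x' y)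
    (h₁add_right : ∀ x y y' : G, β₁ x (y + y') = β₁ x y * β₁ x y')
    (h₂add_left : ∀ x x' y : G, β₂ (x + x') y = β₂ x y * β₂ x' y)
    (h₂add_right : ∀ x y y' : G, β₂ x (y + y') = β₂ x y * β₂ x y') :
    (∃ ρ : G → Circle, ∀ x y : G, β₁ x y * ρ (x + y) = β₂ x y * ρ x * ρ y) ↔
      (∀ x y : G, β₁ x y * (β₂ x y)⁻¹ = β₁ y x * (β₂ y x)⁻¹) := by
  simp only [← div_eq_mul_inv]
  show Cohomologous β₁ β₂ ↔ ∀ x y, β₁ x y / β₂ x y = β₁ y x / β₂ y x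
  refine cohomologous_iff_exists_div_eq.trans ⟨?_, fun hs => exists_eq_mul_div_of_symm _ ?_ ?_ hs⟩
  · rintro ⟨ρ, hρ⟩ x y
    rw [hρ, hρ, add_comm, mul_comm (ρ x)]
  · intro x x' y
    rw [h₁add_left, h₂add_left, mul_div_mul_comm]
  · intro x y y'
    rw [h₁add_right, h₂add_right, mul_div_mul_comm]
end

section
/- Let G be an additive abelian group and let h : G → G be an additive group endomorphism satisfying h(g) + h(g) = g for all g ∈ G. Let β : G × G → Circle be a bicharacter. Define β'(x,y) := β(x, h(y))·β(y, h(x))⁻¹. Then β' is a bicharacter, β' is antisymmetric (β'(x,y) = β'(y,x)⁻¹ for all x,y), and the bicharacter β(x,y)·β'(x,y)⁻¹ is symmetric; in particular β and β' are cohomologous. -/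
/-!
Write `β'(x, y) = β(x, h y) / β(y, h x)`. Biadditivity of `β'` and its antisymmetry are formal.
Since `h` halves, `β(x, y) = β(x, h y)²`, so `β / β' = β(x, h y) β(y, h x)` is visibly symmetric.
Expanding `β(x + y, h (x + y))` by biadditivity shows that `ρ(x) = β(x, h x)⁻¹` is an explicit
coboundary relating `β` and `β'`.
-/

namespace Bicharacter

variable {G M : Type*} [AddCommGroup G] [CommGroup M]

def skewPart (h : G →+ G) (β : G → G → M) (x y : G) : M := β x (h y) / β y (h x)

theorem skewPart_add_left (h : G →+ G) {β : G → G → M}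
    (hl : ∀ x x' y, β (x + x') y = β x y * β x' y)
    (hr : ∀ x y y', β x (y + y') = β x y * β x y') (x x' y : G) :
    skewPart h β (x + x') y = skewPart h β x y * skewPart h β x' y := by
  simp only [skewPart, map_add, hl, hr]
  exact mul_div_mul_comm _ _ _ _

theorem skewPart_add_right (h : G →+ G) {β : G → G → M}
    (hl : ∀ x x' y, β (x + x') y = β x y * β x' y)
    (hr : ∀ x y y', β x (y + y') = β x y * β x y') (x y y' : G) :
    skewPart h β x (y + y') = skewPart h β x y * skewPart h β x y' := by
  simp only [skewPart, map_add, hl, hr]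
  exact mul_div_mul_comm _ _ _ _

theorem skewPart_swap (h : G →+ G) (β : G → G → M) (x y : G) :
    skewPart h β x y = (skewPart h β y x)⁻¹ :=
  (inv_div _ _).symm

theorem apply_half_mul_self {h : G →+ G} (hhalf : ∀ g, h g + h g = g) {β : G → G → M}
    (hr : ∀ x y y', β x (y + y') = β x y * β x y') (x y : G) :
    β x (h y) * β x (h y) = β x y := by
  rw [← hr, hhalf]

theorem div_skewPart {h : G →+ G} (hhalf : ∀ g, h g + h g = g) {β : G → G → M}
    (hr : ∀ x y y', β x (y + y') = β x y * β x y') (x y : G) :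
    β x y / skewPart h β x y = β x (h y) * β y (h x) := by
  rw [← apply_half_mul_self hhalf hr x y, skewPart, div_div_eq_mul_div, mul_right_comm,
    mul_div_cancel_right]

theorem div_skewPart_comm {h : G →+ G} (hhalf : ∀ g, h g + h g = g) {β : G → G → M}
    (hr : ∀ x y y', β x (y + y') = β x y * β x y') (x y : G) :
    β x y / skewPart h β x y = β y x / skewPart h β y x := by
  rw [div_skewPart hhalf hr, div_skewPart hhalf hr, mul_comm]

theorem exists_coboundary_skewPart {h : G →+ G} (hhalf : ∀ g, h g + h g = g) {β : G → G → M}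
    (hl : ∀ x x' y, β (x + x') y = β x y * β x' y)
    (hr : ∀ x y y', β x (y + y') = β x y * β x y') :
    ∃ ρ : G → M, ∀ x y, β x y * ρ (x + y) = skewPart h β x y * ρ x * ρ y := by
  refine ⟨fun x => (β x (h x))⁻¹, fun x y => ?_⟩
  dsimp only
  rw [map_add, hl, hr, hr, ← apply_half_mul_self hhalf hr x y, skewPart]
  apply Additive.ofMul.injective
  simp only [ofMul_mul, ofMul_inv, ofMul_div]
  abel

end Bicharacter

open Bicharacter in
/-- Given a halving endomorphism `h` of an additive abelian group and a bicharacter `β`,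
the map `β'(x,y) = β(x, h y) * β(y, h x)⁻¹` is an antisymmetric bicharacter cohomologous
to `β`, with `β * β'⁻¹` symmetric. -/
theorem antisymmetric_representative_of_bicharacter {G : Type*} [AddCommGroup G]
    (h : G →+ G) (hhalf : ∀ g : G, h g + h g = g)
    (β : G → G → Circle)
    (hadd_left : ∀ x x' y : G, β (x + x') y = β x y * β x' y)
    (hadd_right : ∀ x y y' : G, β x (y + y') = β x y * β x y')
    (β' : G → G → Circle)
    (hβ' : ∀ x y : G, β' x y = β x (h y) * (β y (h x))⁻¹) :
    (∀ x x' y : G, β' (x + x') y = β' x y * β' x' y) ∧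
    (∀ x y y' : G, β' x (y + y') = β' x y * β' x y') ∧
    (∀ x y : G, β' x y = (β' y x)⁻¹) ∧
    (∀ x y : G, β x y * (β' x y)⁻¹ = β y x * (β' y x)⁻¹) ∧
    (∃ ρ : G → Circle, ∀ x y : G, β x y * ρ (x + y) = β' x y * ρ x * ρ y) := by
  obtain rfl : β' = skewPart h β := by
    funext x y
    rw [hβ', skewPart, div_eq_mul_inv]
  simp only [← div_eq_mul_inv]
  exact ⟨skewPart_add_left h hadd_left hadd_right, skewPart_add_right h hadd_left hadd_right,
    skewPart_swap h β, div_skewPart_comm hhalf hadd_right,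
    exists_coboundary_skewPart hhalf hadd_left hadd_right⟩
end

section
/- Let G be an additive abelian group such that every element is divisible by 2 (for every g ∈ G there exists g' ∈ G with g = g' + g'). If β₁ and β₂ are antisymmetric bicharacters on G with values in Circle such that the bicharacter β(x,y) := β₁(x,y)·β₂(x,y)⁻¹ is symmetric, then β₁ = β₂. In particular, each cohomology class of bicharacters on such a group contains at most one antisymmetric bicharacter. -/
/-! The quotient `β = β₁ β₂⁻¹` is additive in its first variable, symmetric by hypothesis and
antisymmetric as a quotient of antisymmetric maps, so `β x y ^ 2 = 1`. Writing `x = x' + x'`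
gives `β x y = β x' y ^ 2 = 1`. -/

section Bicharacter

variable {G M : Type*} [CommGroup M]

theorem mul_inv_antisymm {β₁ β₂ : G → G → M} (h₁ : ∀ x y, β₁ x y = (β₁ y x)⁻¹)
    (h₂ : ∀ x y, β₂ x y = (β₂ y x)⁻¹) (x y : G) :
    β₁ x y * (β₂ x y)⁻¹ = (β₁ y x * (β₂ y x)⁻¹)⁻¹ := by
  rw [h₁, h₂, mul_inv]

theorem mul_inv_map_add_left [Add G] {β₁ β₂ : G → G → M}
    (h₁ : ∀ x x' y, β₁ (x + x') y = β₁ x y * β₁ x' y)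
    (h₂ : ∀ x x' y, β₂ (x + x') y = β₂ x y * β₂ x' y) (x x' y : G) :
    β₁ (x + x') y * (β₂ (x + x') y)⁻¹ =
      β₁ x y * (β₂ x y)⁻¹ * (β₁ x' y * (β₂ x' y)⁻¹) := by
  rw [h₁, h₂, mul_inv, mul_mul_mul_comm]

theorem mul_self_eq_one_of_symm_of_antisymm {β : G → G → M} (hs : ∀ x y, β x y = β y x)
    (ha : ∀ x y, β x y = (β y x)⁻¹) (x y : G) : β x y * β x y = 1 :=
  mul_eq_one_iff_eq_inv.2 ((ha x y).trans (congrArg _ (hs y x)))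

theorem eq_one_of_symm_of_antisymm [Add G] (hdiv : ∀ g : G, ∃ g', g = g' + g')
    {β : G → G → M} (hadd : ∀ x x' y, β (x + x') y = β x y * β x' y)
    (hs : ∀ x y, β x y = β y x) (ha : ∀ x y, β x y = (β y x)⁻¹) (x y : G) : β x y = 1 := by
  obtain ⟨x', rfl⟩ := hdiv x
  rw [hadd, mul_self_eq_one_of_symm_of_antisymm hs ha]

end Bicharacter

theorem antisymmetric_bicharacter_unique_general {G : Type*} [AddCommGroup G]
    (hdiv : ∀ g : G, ∃ g' : G, g = g' + g')
    (β₁ β₂ : G → G → Circle)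
    (h₁add_left : ∀ x x' y : G, β₁ (x + x') y = β₁ x y * β₁ x' y)
    (h₂add_left : ∀ x x' y : G, β₂ (x + x') y = β₂ x y * β₂ x' y)
    (h₁anti : ∀ x y : G, β₁ x y = (β₁ y x)⁻¹)
    (h₂anti : ∀ x y : G, β₂ x y = (β₂ y x)⁻¹)
    (hsym : ∀ x y : G, β₁ x y * (β₂ x y)⁻¹ = β₁ y x * (β₂ y x)⁻¹) :
    ∀ x y : G, β₁ x y = β₂ x y := fun x y =>
  mul_inv_eq_one.1 <| eq_one_of_symm_of_antisymm (β := fun x y => β₁ x y * (β₂ x y)⁻¹) hdiv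
    (mul_inv_map_add_left h₁add_left h₂add_left) hsym (mul_inv_antisymm h₁anti h₂anti) x y

/-- On a 2-divisible additive abelian group, each cohomology class of bicharacters
contains at most one antisymmetric bicharacter: two antisymmetric bicharacters whose
quotient is symmetric are equal. -/
theorem antisymmetric_bicharacter_unique {G : Type*} [AddCommGroup G]
    (hdiv : ∀ g : G, ∃ g' : G, g = g' + g')
    (β₁ β₂ : G → G → Circle)
    (h₁add_left : ∀ x x' y : G, β₁ (x + x') y = β₁ x y * β₁ x' y)
    (h₁add_right : ∀ x y y' : G, β₁ x (y + y') = β₁ x y * β₁ x y')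
    (h₂add_left : ∀ x x' y : G, β₂ (x + x') y = β₂ x y * β₂ x' y)
    (h₂add_right : ∀ x y y' : G, β₂ x (y + y') = β₂ x y * β₂ x y')
    (h₁anti : ∀ x y : G, β₁ x y = (β₁ y x)⁻¹)
    (h₂anti : ∀ x y : G, β₂ x y = (β₂ y x)⁻¹)
    (hsym : ∀ x y : G, β₁ x y * (β₂ x y)⁻¹ = β₁ y x * (β₂ y x)⁻¹) :
    ∀ x y : G, β₁ x y = β₂ x y :=
  antisymmetric_bicharacter_unique_general hdiv β₁ β₂ h₁add_left h₂add_left h₁anti h₂anti hsym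
end

section
/- Let G be a locally compact Hausdorff abelian topological group with Haar measure μ, and let σ : G × G → Circle be a continuous 2-cocycle, i.e. σ(x,y)·σ(x+y,z) = σ(x,y+z)·σ(y,z) for all x,y,z ∈ G. For continuous compactly supported f, g : G → ℂ define the twisted convolution (f ∗_σ g)(ξ) = ∫_G σ(η, ξ−η)·f(η)·g(ξ−η) dμ(η). Then f ∗_σ g is again continuous with compact support, and the twisted convolution is associative: ((f ∗_σ g) ∗_σ h)(ξ) = (f ∗_σ (g ∗_σ h))(ξ) for all continuous compactly supported f, g, h : G → ℂ and all ξ ∈ G. -/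
/-!
Continuity of `f ∗_σ g` is continuity of a parametric integral whose integrand is jointly
continuous and, in the integration variable, supported in the compact set `tsupport f`.
For associativity, both sides are iterated integrals of the same continuous, compactly supported
function on `G × G`: after Fubini (valid for such functions without σ-finiteness) and the
substitution `η ↦ τ + η`, the phases `σ(τ, η) σ(τ + η, ξ - τ - η)` and `σ(τ, ξ - τ) σ(η, ξ - τ - η)`
agree by the cocycle identity.
-/

open MeasureTheory

/-- The twisted convolution of `f, g : G → ℂ` with respect to a Circle-valued cocycle `σ`,
with respect to the measure `μ`. -/
noncomputable def twistedConv {G : Type*} [AddCommGroup G] [MeasurableSpace G]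
    (μ : Measure G) (σ : G → G → Circle) (f g : G → ℂ) : G → ℂ :=
  fun ξ => ∫ η, ((σ η (ξ - η) : ℂ) * f η * g (ξ - η)) ∂μ

open Function Set
open scoped Pointwise

theorem HasCompactSupport.mul_comp_sub {G M₀ : Type*} [AddGroup G] [TopologicalSpace G]
    [IsTopologicalAddGroup G] [MulZeroClass M₀] {f g : G → M₀}
    (hf : HasCompactSupport f) (hg : HasCompactSupport g) :
    HasCompactSupport fun p : G × G => f p.2 * g (p.1 - p.2) := by
  have hshear : Continuous fun q : G × G => (q.2 + q.1, q.1) := by fun_prop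
  refine .intro ((hf.isCompact.prod hg.isCompact).image hshear) fun p hp => ?_
  by_contra! hne
  exact hp ⟨(p.2, p.1 - p.2), ⟨subset_tsupport f (left_ne_zero_of_mul hne),
    subset_tsupport g (right_ne_zero_of_mul hne)⟩, by simp⟩

theorem integral_integral_add_left_swap_of_hasCompactSupport {G E : Type*} [AddGroup G]
    [TopologicalSpace G] [IsTopologicalAddGroup G] [MeasurableSpace G] [BorelSpace G]
    [NormedAddCommGroup E] [NormedSpace ℝ E] {μ : Measure G} [IsFiniteMeasureOnCompacts μ]
    [μ.IsAddLeftInvariant] {K : G → G → E}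
    (hK : Continuous (uncurry K)) (hKc : HasCompactSupport (uncurry K)) :
    ∫ η, ∫ τ, K η τ ∂μ ∂μ = ∫ τ, ∫ η, K (τ + η) τ ∂μ ∂μ := by
  rw [integral_integral_swap_of_hasCompactSupport hK hKc]
  congr 1 with τ
  exact (integral_add_left_eq_self (fun η => K η τ) τ).symm

section TwistedConv

variable {G : Type*} [AddCommGroup G] [MeasurableSpace G] {μ : Measure G} {σ : G → G → Circle}
  {f g h : G → ℂ}

theorem support_twistedConv_subset : support (twistedConv μ σ f g) ⊆ support f + support g := by
  refine fun ξ hξ => by_contra fun hξ' => hξ ?_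
  have hzero : ∀ η, f η = 0 ∨ g (ξ - η) = 0 := fun η => by
    by_contra! hη
    exact hξ' ⟨η, hη.1, ξ - η, hη.2, add_sub_cancel η ξ⟩
  refine integral_eq_zero_of_ae (.of_forall fun η => ?_)
  rcases hzero η with h | h <;> simp [h]

variable [TopologicalSpace G] [IsTopologicalAddGroup G]

theorem HasCompactSupport.twistedConv (hf : HasCompactSupport f) (hg : HasCompactSupport g) :
    HasCompactSupport (twistedConv μ σ f g) :=
  .intro (hf.isCompact.add hg.isCompact) fun _ hξ => notMem_support.1 fun h' =>
    hξ (add_subset_add (subset_tsupport f) (subset_tsupport g) (support_twistedConv_subset h'))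

variable [BorelSpace G] [IsFiniteMeasureOnCompacts μ]

theorem continuous_twistedConv (hσ : Continuous fun p : G × G => σ p.1 p.2) (hf : Continuous f)
    (hfc : HasCompactSupport f) (hg : Continuous g) : Continuous (twistedConv μ σ f g) := by
  have hσ' : Continuous (uncurry fun x y => (σ x y : ℂ)) := continuous_subtype_val.comp hσ
  refine continuousOn_univ.1 (continuousOn_integral_of_compact_support hfc ?_ fun ξ η _ hη => ?_)
  · exact Continuous.continuousOn (by fun_prop)
  · simp [image_eq_zero_of_notMem_tsupport hη]

theorem twistedConv_assoc [μ.IsAddLeftInvariant] (hσ : Continuous fun p : G × G => σ p.1 p.2)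
    (hcocycle : ∀ x y z : G, σ x y * σ (x + y) z = σ x (y + z) * σ y z)
    (hf : Continuous f) (hfc : HasCompactSupport f) (hg : Continuous g) (hgc : HasCompactSupport g)
    (hh : Continuous h) (ξ : G) :
    twistedConv μ σ (twistedConv μ σ f g) h ξ = twistedConv μ σ f (twistedConv μ σ g h) ξ := by
  have hσ' : Continuous (uncurry fun x y => (σ x y : ℂ)) := continuous_subtype_val.comp hσ
  set K : G → G → ℂ := fun η τ =>
    σ η (ξ - η) * σ τ (η - τ) * h (ξ - η) * (f τ * g (η - τ)) with hK_def
  have hK : Continuous (uncurry K) := by fun_prop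
  have hKc : HasCompactSupport (uncurry K) := (hfc.mul_comp_sub hgc).mul_left
  calc twistedConv μ σ (twistedConv μ σ f g) h ξ = ∫ η, ∫ τ, K η τ ∂μ ∂μ := by
        simp only [twistedConv, hK_def, ← integral_const_mul, ← integral_mul_const]
        congr 1 with η
        congr 1 with τ
        ring
    _ = ∫ τ, ∫ η, K (τ + η) τ ∂μ ∂μ := integral_integral_add_left_swap_of_hasCompactSupport hK hKc
    _ = twistedConv μ σ f (twistedConv μ σ g h) ξ := by
        simp only [twistedConv, hK_def, ← integral_const_mul]
        congr 1 with τ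
        congr 1 with η
        have hphase := congrArg ((↑) : Circle → ℂ) (hcocycle τ η (ξ - τ - η))
        rw [Circle.coe_mul, Circle.coe_mul, show η + (ξ - τ - η) = ξ - τ by abel] at hphase
        rw [add_sub_cancel_left, show ξ - (τ + η) = ξ - τ - η by abel]
        linear_combination (f τ * g η * h (ξ - τ - η)) * hphase

end TwistedConv

theorem twistedConv_continuous_hasCompactSupport_and_assoc_general
    {G : Type*} [AddCommGroup G] [TopologicalSpace G] [IsTopologicalAddGroup G]
    [MeasurableSpace G] [BorelSpace G]
    (μ : Measure G) [μ.IsAddHaarMeasure]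
    (σ : G → G → Circle)
    (hσcont : Continuous fun p : G × G => σ p.1 p.2)
    (hcocycle : ∀ x y z : G, σ x y * σ (x + y) z = σ x (y + z) * σ y z) :
    (∀ f g : G → ℂ, Continuous f → HasCompactSupport f →
      Continuous g → HasCompactSupport g →
      Continuous (twistedConv μ σ f g) ∧ HasCompactSupport (twistedConv μ σ f g)) ∧
    (∀ f g h : G → ℂ, Continuous f → HasCompactSupport f →
      Continuous g → HasCompactSupport g → Continuous h → HasCompactSupport h →
      ∀ ξ : G, twistedConv μ σ (twistedConv μ σ f g) h ξ
        = twistedConv μ σ f (twistedConv μ σ g h) ξ) :=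
  ⟨fun _ _ hf hfc hg hgc => ⟨continuous_twistedConv hσcont hf hfc hg, hfc.twistedConv hgc⟩,
    fun _ _ _ hf hfc hg hgc hh _ => twistedConv_assoc hσcont hcocycle hf hfc hg hgc hh⟩

/-- Twisted convolution (w.r.t. a continuous 2-cocycle and Haar measure on a locally compact
Hausdorff abelian group) of continuous compactly supported functions is continuous with
compact support, and is associative. -/
theorem twistedConv_continuous_hasCompactSupport_and_assoc
    {G : Type*} [AddCommGroup G] [TopologicalSpace G] [IsTopologicalAddGroup G]
    [LocallyCompactSpace G] [T2Space G] [MeasurableSpace G] [BorelSpace G]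
    (μ : Measure G) [μ.IsAddHaarMeasure]
    (σ : G → G → Circle)
    (hσcont : Continuous fun p : G × G => σ p.1 p.2)
    (hcocycle : ∀ x y z : G, σ x y * σ (x + y) z = σ x (y + z) * σ y z) :
    (∀ f g : G → ℂ, Continuous f → HasCompactSupport f →
      Continuous g → HasCompactSupport g →
      Continuous (twistedConv μ σ f g) ∧ HasCompactSupport (twistedConv μ σ f g)) ∧
    (∀ f g h : G → ℂ, Continuous f → HasCompactSupport f →
      Continuous g → HasCompactSupport g → Continuous h → HasCompactSupport h →
      ∀ ξ : G, twistedConv μ σ (twistedConv μ σ f g) h ξ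
        = twistedConv μ σ f (twistedConv μ σ g h) ξ) :=
  twistedConv_continuous_hasCompactSupport_and_assoc_general μ σ hσcont hcocycle
end

section
/- Let n ∈ ℕ, let θ be a skew-symmetric real n × n matrix, and set γ(p,q) := ⟨p, θq⟩ for p,q ∈ ℤⁿ. For ℏ ∈ ℝ define σ_ℏ(p,q) := exp(−πiℏ·γ(p,q)), and for finitely supported ψ, φ : ℤⁿ → ℂ define (ψ ⋆_ℏ φ)(p) := Σ_{p₁+p₂=p} ψ(p₁)·φ(p₂)·σ_ℏ(p₁,p₂). Then for every p ∈ ℤⁿ, the semiclassical limit holds: lim_{ℏ→0} ((ψ ⋆_ℏ φ)(p) − (ψ ⋆_0 φ)(p))/(iℏ) = −π·Σ_{p₁+p₂=p} γ(p₁,p₂)·ψ(p₁)·φ(p₂), where ⋆_0 is the ordinary (untwisted) convolution. -/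
/-!
Every sum involved is a finite sum over the support of `ψ`, so the limit can be taken term by
term, and each term's difference quotient converges to the derivative at `ℏ = 0` of
`ℏ ↦ exp (-π i ℏ γ)`, namely `-π i γ`.
-/

open Matrix

/-- The skew-symmetric biadditive form `γ(p,q) = ⟨p, θq⟩` on `ℤⁿ` determined by a real
matrix `θ`. -/
noncomputable def intSkewForm {n : ℕ} (θ : Matrix (Fin n) (Fin n) ℝ)
    (p q : Fin n → ℤ) : ℝ :=
  (fun i => (p i : ℝ)) ⬝ᵥ θ.mulVec (fun i => (q i : ℝ))

open Filter Topology Complex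

theorem Complex.tendsto_exp_mul_sub_one_div (c : ℂ) :
    Tendsto (fun t : ℝ => (exp (c * t) - 1) / t) (𝓝[≠] 0) (𝓝 c) := by
  have hderiv : HasDerivAt (fun t : ℝ => exp (c * t)) c 0 := by
    simpa using ((hasDerivAt_id (0 : ℝ)).ofReal_comp.const_mul c).cexp
  refine (hasDerivAt_iff_tendsto_slope.mp hderiv).congr fun t => ?_
  simp [slope_def_module, div_eq_inv_mul]

theorem tendsto_mul_exp_phase_sub_div (a γ : ℂ) :
    Tendsto (fun ℏ : ℝ => (a * exp (-(Real.pi : ℂ) * I * ℏ * γ) - a) / (I * ℏ))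
      (𝓝[≠] 0) (𝓝 (-(Real.pi : ℂ) * (γ * a))) := by
  have hquot : ∀ ℏ : ℝ, (a * exp (-(Real.pi : ℂ) * I * ℏ * γ) - a) / (I * ℏ) =
      a / I * ((exp ((-(Real.pi : ℂ) * I * γ) * ℏ) - 1) / ℏ) := fun ℏ => by
    rw [mul_right_comm _ (ℏ : ℂ)]
    ring
  have hlim : a / I * (-(Real.pi : ℂ) * I * γ) = -(Real.pi : ℂ) * (γ * a) := by
    field_simp
  simpa only [hquot, hlim] using
    (tendsto_exp_mul_sub_one_div (-(Real.pi : ℂ) * I * γ)).const_mul (a / I)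

theorem semiclassical_limit_twisted_convolution_general {n : ℕ}
    (θ : Matrix (Fin n) (Fin n) ℝ)
    (ψ φ : (Fin n → ℤ) → ℂ)
    (hψ : (Function.support ψ).Finite)
    (p : Fin n → ℤ) :
    Filter.Tendsto
      (fun ℏ : ℝ =>
        ((∑ᶠ q : Fin n → ℤ, ψ q * φ (p - q) *
            Complex.exp (-(Real.pi : ℂ) * Complex.I * (ℏ : ℂ) *
              ((intSkewForm θ q (p - q) : ℝ) : ℂ)))
          - ∑ᶠ q : Fin n → ℤ, ψ q * φ (p - q)) / (Complex.I * (ℏ : ℂ)))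
      (nhdsWithin 0 {0}ᶜ)
      (nhds (-(Real.pi : ℂ) *
        ∑ᶠ q : Fin n → ℤ, ((intSkewForm θ q (p - q) : ℝ) : ℂ) * ψ q * φ (p - q))) := by
  have hsum : ∀ f : (Fin n → ℤ) → ℂ, (∀ q, ψ q = 0 → f q = 0) →
      ∑ᶠ q, f q = ∑ q ∈ hψ.toFinset, f q := fun f hf =>
    finsum_eq_sum_of_support_subset f fun q hq => by simpa using mt (hf q) hq
  simp (disch := intro q hq; simp [hq]) only [hsum, ← Finset.sum_sub_distrib, Finset.sum_div,
    Finset.mul_sum]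
  refine tendsto_finsetSum _ fun q _ => ?_
  simpa only [mul_assoc] using tendsto_mul_exp_phase_sub_div (ψ q * φ (p - q)) _

/-- Semiclassical limit for the twisted convolution on `ℤⁿ` (the Fourier picture of
Rieffel's strict deformation quantization of the `n`-torus): as `ℏ → 0`,
`((ψ ⋆_ℏ φ)(p) − (ψ ⋆_0 φ)(p))/(iℏ) → −π ∑_{p₁+p₂=p} γ(p₁,p₂) ψ(p₁) φ(p₂)`. -/
theorem semiclassical_limit_twisted_convolution {n : ℕ}
    (θ : Matrix (Fin n) (Fin n) ℝ) (hskew : θᵀ = -θ)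
    (ψ φ : (Fin n → ℤ) → ℂ)
    (hψ : (Function.support ψ).Finite) (hφ : (Function.support φ).Finite)
    (p : Fin n → ℤ) :
    Filter.Tendsto
      (fun ℏ : ℝ =>
        ((∑ᶠ q : Fin n → ℤ, ψ q * φ (p - q) *
            Complex.exp (-(Real.pi : ℂ) * Complex.I * (ℏ : ℂ) *
              ((intSkewForm θ q (p - q) : ℝ) : ℂ)))
          - ∑ᶠ q : Fin n → ℤ, ψ q * φ (p - q)) / (Complex.I * (ℏ : ℂ)))
      (nhdsWithin 0 {0}ᶜ)
      (nhds (-(Real.pi : ℂ) *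
        ∑ᶠ q : Fin n → ℤ, ((intSkewForm θ q (p - q) : ℝ) : ℂ) * ψ q * φ (p - q))) :=
  semiclassical_limit_twisted_convolution_general θ ψ φ hψ p
end
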